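/- arXiv:0705.3006 — 2 statements merged into one kernel-verified Lean document; each statement's English description precedes it below -/
import Mathlib

section
/- There are no integers a, b, c with a + b + c = 1 such that, setting t = b + c, the two rational numbers (1/87)(56t + 406) and (1/87)(−28t + 406) are both non-negative integers. -/
/-!
Write `t = b + c` and `87 m = 56 t + 406`, `87 n = -28 t + 406` with `m n ≥ 0`.
Eliminating `t` gives `m + 2 n = 14`, so `m ≤ 14`; but `56 ∣ 87 m - 406` forces
`m ≡ 42 (mod 56)`, which no `m` with `0 ≤ m ≤ 14` satisfies.
-/

theorem Int.eq_mul_of_cast_div_eq_natCast {z d : ℤ} {n : ℕ} (hd : d ≠ 0)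
    (h : (z : ℚ) / d = n) : z = d * n := by
  rw [div_eq_iff (by exact_mod_cast hd)] at h
  exact_mod_cast h.trans (mul_comm _ _)

section

variable {t m n : ℤ}

theorem add_two_mul_eq_of_luthar_passi (hm : 56 * t + 406 = 87 * m)
    (hn : -28 * t + 406 = 87 * n) : m + 2 * n = 14 := by
  linarith

theorem emod_eq_of_luthar_passi (hm : 56 * t + 406 = 87 * m) : m % 56 = 42 := by
  omega

end

/-- Luthar–Passi constraints excluding units of order 87 in `V(ℤRu)`: there are no
integers `a, b, c` with `a + b + c = 1` such that, with `t = b + c`, the rationals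
`(1/87)(56t + 406)` and `(1/87)(−28t + 406)` are both non-negative integers. -/
theorem no_order87_unit_Ru :
    ¬ ∃ a b c : ℤ, a + b + c = 1 ∧
      (∃ n : ℕ, ((56 * (b + c) + 406 : ℤ) : ℚ) / 87 = n) ∧
      (∃ n : ℕ, ((-28 * (b + c) + 406 : ℤ) : ℚ) / 87 = n) := by
  rintro ⟨-, b, c, -, ⟨m, hm⟩, ⟨n, hn⟩⟩
  have hm' := Int.eq_mul_of_cast_div_eq_natCast (d := 87) (by norm_num) hm
  have hn' := Int.eq_mul_of_cast_div_eq_natCast (d := 87) (by norm_num) hn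
  have hsum := add_two_mul_eq_of_luthar_passi hm' hn'
  have hmod := emod_eq_of_luthar_passi hm'
  omega
end

section
/- For every x in the set {0, 5, −9, −6, 2, 8, −3, −4, 11, 10, 7, −1, −7} and every integer y with −4 ≤ y ≤ 5, there are no integers a, b, c, e with a + b + c + e = 1 such that, setting t1 = 6a − 14b − c − e, t2 = 11a − 7b, t3 = 64b + 14c − 15e, the six rational numbers (1/58)(−28·t1 + 420 − 20x), (1/58)(28·t1 + 392 + 20x), (1/58)(56·t2 + 392 + 36x), (1/58)(−56·t2 + 420 − 36x), (1/58)(−t3 + 110670 − 64x − 29y), (1/58)(t3 + 110542 + 64x − 29y) are all non-negative integers and, additionally in the cases x ∈ {0, 7, −7}, the rational number (1/58)(−t1 + 363 + 20x) is also a non-negative integer. -/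
/-!
On the hyperplane `a + b + c + e = 1` one has `t1 = 7a - 13b - 1` and `t2 = 11a - 7b`, so
`7 t2 - 11 (t1 + 1) = 94 b`. Writing the first and third constraints as `58 n₁` and `58 n₃`,
the second and fourth say `n₁, n₃ ≤ 14`, and eliminating `t1, t2` gives
`27 n₁ + 15 n₃ ≡ 2 (mod 47)`, while reducing mod 4 and mod 7 gives `n₁` even and
`n₁ ≡ n₃ (mod 7)`. The only solution is `(n₁, n₃) = (14, 0)`, which forces `x = 28 m` and
`t1 = -14 - 20 m`. Among the listed values only `x = 0` is divisible by 28, and then `t1` is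
even, so the seventh numerator `-t1 + 363` is odd.
-/

theorem exists_nat_div_eq_iff {m k : ℤ} (hk : 0 < k) :
    (∃ n : ℕ, (m : ℚ) / k = n) ↔ 0 ≤ m ∧ k ∣ m := by
  constructor
  · rintro ⟨n, hn⟩
    rw [div_eq_iff (by positivity)] at hn
    have hm : m = n * k := by exact_mod_cast hn
    exact ⟨hm ▸ by positivity, hm ▸ dvd_mul_left k n⟩
  · rintro ⟨hm, n, rfl⟩
    lift n to ℕ using nonneg_of_mul_nonneg_right hm hk
    exact ⟨n, by push_cast; field_simp⟩

theorem eq_fourteen_and_eq_zero_of_dvd {n₁ n₃ : ℤ} (h₁ : 0 ≤ n₁ ∧ n₁ ≤ 14)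
    (h₃ : 0 ≤ n₃ ∧ n₃ ≤ 14) (h_two : 2 ∣ n₁) (h_seven : 7 ∣ n₁ - n₃) (h_fortyseven : 47 ∣ 27 * n₁ + 15 * n₃ - 2) :
    n₁ = 14 ∧ n₃ = 0 := by
  obtain ⟨h₁_lo, h₁_hi⟩ := h₁
  obtain ⟨h₃_lo, h₃_hi⟩ := h₃
  interval_cases n₁ <;> omega

theorem exists_eq_of_luthar_passi {x t1 t2 b : ℤ} (hb : 7 * t2 - 11 * (t1 + 1) = 94 * b)
    (h1 : 0 ≤ -28 * t1 + 420 - 20 * x ∧ 58 ∣ -28 * t1 + 420 - 20 * x)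
    (h2 : 0 ≤ 28 * t1 + 392 + 20 * x)
    (h3 : 0 ≤ 56 * t2 + 392 + 36 * x ∧ 58 ∣ 56 * t2 + 392 + 36 * x)
    (h4 : 0 ≤ -56 * t2 + 420 - 36 * x) :
    ∃ m, x = 28 * m ∧ t1 = -14 - 20 * m := by
  obtain ⟨h1, n₁, hn₁⟩ := h1
  obtain ⟨h3, n₃, hn₃⟩ := h3
  obtain ⟨rfl, rfl⟩ : n₁ = 14 ∧ n₃ = 0 :=
    eq_fourteen_and_eq_zero_of_dvd ⟨by linarith, by linarith⟩ ⟨by linarith, by linarith⟩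
      ⟨105 - 14 * n₁ - 7 * t1 - 5 * x, by linarith⟩
      ⟨2 - 2 * t1 - 4 * t2 - 4 * x - 4 * (n₁ - n₃), by linarith⟩
      ⟨56 * b - 13 * n₁ - 4 * n₃ - 2 * x + 134, by linarith⟩
  exact ⟨b - 1, by linarith, by linarith⟩

/-- Luthar–Passi constraints excluding units of order 58 in `V(ℤRu)`, second family of
cases: for every `x` in `{0, 5, −9, −6, 2, 8, −3, −4, 11, 10, 7, −1, −7}` and every
integer `y` with `−4 ≤ y ≤ 5`, there are no integers `a, b, c, e` with
`a + b + c + e = 1` such that, with `t1 = 6a − 14b − c − e`, `t2 = 11a − 7b` and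
`t3 = 64b + 14c − 15e`, the six rationals `(1/58)(−28t1 + 420 − 20x)`,
`(1/58)(28t1 + 392 + 20x)`, `(1/58)(56t2 + 392 + 36x)`, `(1/58)(−56t2 + 420 − 36x)`,
`(1/58)(−t3 + 110670 − 64x − 29y)` and `(1/58)(t3 + 110542 + 64x − 29y)` are all
non-negative integers and, additionally when `x ∈ {0, 7, −7}`, the rational
`(1/58)(−t1 + 363 + 20x)` is also a non-negative integer. -/
theorem no_order58_unit_Ru_second_family :
    ∀ x : ℤ, x ∈ ({0, 5, -9, -6, 2, 8, -3, -4, 11, 10, 7, -1, -7} : Set ℤ) →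
    ∀ y : ℤ, -4 ≤ y → y ≤ 5 →
      ¬ ∃ a b c e : ℤ, a + b + c + e = 1 ∧
        (∃ n : ℕ, ((-28 * (6 * a - 14 * b - c - e) + 420 - 20 * x : ℤ) : ℚ) / 58 = n) ∧
        (∃ n : ℕ, ((28 * (6 * a - 14 * b - c - e) + 392 + 20 * x : ℤ) : ℚ) / 58 = n) ∧
        (∃ n : ℕ, ((56 * (11 * a - 7 * b) + 392 + 36 * x : ℤ) : ℚ) / 58 = n) ∧
        (∃ n : ℕ, ((-56 * (11 * a - 7 * b) + 420 - 36 * x : ℤ) : ℚ) / 58 = n) ∧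
        (∃ n : ℕ, ((-(64 * b + 14 * c - 15 * e) + 110670 - 64 * x - 29 * y : ℤ) : ℚ) / 58 = n) ∧
        (∃ n : ℕ, (((64 * b + 14 * c - 15 * e) + 110542 + 64 * x - 29 * y : ℤ) : ℚ) / 58 = n) ∧
        (x ∈ ({0, 7, -7} : Set ℤ) →
          ∃ n : ℕ, ((-(6 * a - 14 * b - c - e) + 363 + 20 * x : ℤ) : ℚ) / 58 = n) := by
  have h58 (z : ℤ) := exists_nat_div_eq_iff (m := z) (k := 58) (by norm_num)
  simp only [Int.cast_ofNat] at h58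
  rintro x hx y - - ⟨a, b, c, e, hsum, h1, h2, h3, h4, -, -, h7⟩
  simp only [h58] at h1 h2 h3 h4 h7
  obtain ⟨m, rfl, ht1⟩ := exists_eq_of_luthar_passi (t1 := 6 * a - 14 * b - c - e)
    (t2 := 11 * a - 7 * b) (b := b) (by linear_combination 11 * hsum) h1 h2.1 h3 h4.1
  obtain rfl : m = 0 := by
    simp only [Set.mem_insert_iff, Set.mem_singleton_iff] at hx
    clear h1 h2 h3 h4 h7
    omega
  have h7 := (h7 (by simp)).2
  rw [ht1] at h7
  norm_num at h7
end
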